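/- Let μ be a point process on ℝ^d with Papangelou intensity r (Mecke identity), and let H : Γ × ℝ^d × ℝ^d → ℝ be a bounded measurable function such that ∫_Γ ∫∫ r(x,γ) r(y,γ) |H(γ+δ_x+δ_y,x,y)| dy dx μ(dγ) < ∞ and ∫_Γ ∫ γ(dx) ∫ (γ−δ_x)(dy) |H(γ,x,y)| μ(dγ) < ∞. Then the kernel r(x,γ)·D_x^+r(y,·)(γ) is symmetric under exchange of x and y in the following sense: ∫_Γ ∫_{ℝ^d} ∫_{ℝ^d} r(x,γ) [r(y,γ) − r(y,γ+δ_x)] H(γ+δ_x+δ_y,x,y) dy dx μ(dγ) = ∫_Γ ∫_{ℝ^d} ∫_{ℝ^d} r(y,γ) [r(x,γ) − r(x,γ+δ_y)] H(γ+δ_x+δ_y,x,y) dx dy μ(dγ); indeed both sides equal ∫_Γ ∫∫ r(x,γ) r(y,γ) H(γ+δ_x+δ_y,x,y) dy dx μ(dγ) − ∫_Γ ∫γ(dx)∫(γ−δ_x)(dy) H(γ,x,y) μ(dγ). -/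

import Mathlib

open MeasureTheory ENNReal
open scoped Classical

noncomputable section

abbrev Pt (d : ℕ) := EuclideanSpace ℝ (Fin d)
abbrev Config (d : ℕ) := MeasureTheory.Measure (Pt d)

/-- A locally finite point configuration: an `ℕ ∪ {∞}`-valued Radon measure,
i.e. a locally finite countable sum of Dirac measures. -/
def IsConfig {d : ℕ} (γ : Config d) : Prop :=
  IsLocallyFiniteMeasure γ ∧
    ∃ (I : Set ℕ) (x : I → Pt d), γ = Measure.sum fun i => Measure.dirac (x i)

/-- Birth difference operator. -/
def Dplus {d : ℕ} (F : Config d → ℝ) (x : Pt d) (γ : Config d) : ℝ :=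
  F γ - F (γ + Measure.dirac x)

/-- Death difference operator; set to `0` when `x` is not an atom of `γ`. -/
def Dminus {d : ℕ} (F : Config d → ℝ) (x : Pt d) (γ : Config d) : ℝ :=
  if γ {x} ≠ 0 then F (γ - Measure.dirac x) - F γ else 0

def DpDp {d : ℕ} (F : Config d → ℝ) (x y : Pt d) (γ : Config d) : ℝ :=
  Dplus F y γ - Dplus F y (γ + Measure.dirac x)

def DpDm {d : ℕ} (F : Config d → ℝ) (x y : Pt d) (γ : Config d) : ℝ :=
  Dminus F y γ - Dminus F y (γ + Measure.dirac x)

def DmDm {d : ℕ} (F : Config d → ℝ) (x y : Pt d) (γ : Config d) : ℝ :=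
  if γ {x} ≠ 0 then Dminus F y (γ - Measure.dirac x) - Dminus F y γ else 0

/-- Cylinder functions. -/
def IsCylinder {d : ℕ} (F : Config d → ℝ) : Prop :=
  ∃ (N : ℕ) (g : (Fin N → ℝ) → ℝ) (φ : Fin N → Pt d → ℝ),
    Continuous g ∧ (∃ C, ∀ v, |g v| ≤ C) ∧
    (∀ i, Continuous (φ i) ∧ HasCompactSupport (φ i)) ∧
    ∀ γ : Config d, F γ = g fun i => ∫ x, φ i x ∂γ

/-- The generator of the Glauber dynamics. -/
def Lgen {d : ℕ} (r : Pt d → Config d → ℝ) (F : Config d → ℝ) (γ : Config d) : ℝ :=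
  (∫ x, Dminus F x γ ∂γ) - ∫ x, r x γ * Dplus F x γ

def erealExpNeg (a : EReal) : ℝ := if a = ⊤ then 0 else Real.exp (-a.toReal)

/-- `e^{-E(x,γ)}` for `E(x,γ) = ∑_{y ∈ γ} φ(x-y)` (zero when the sum is not
absolutely convergent or hits `+∞`). -/
def expE {d : ℕ} (φ : Pt d → EReal) (x : Pt d) (γ : Config d) : ℝ :=
  if (Integrable (fun y => (φ (x - y)).toReal) γ ∧ ∀ᵐ y ∂γ, φ (x - y) ≠ ⊤)
  then Real.exp (-∫ y, (φ (x - y)).toReal ∂γ) else 0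

/-- Positive definite (locally bounded measurable) function, normalized at `0`. -/
def PosDefFn {d : ℕ} (u : Pt d → ℝ) : Prop :=
  u 0 ≤ 1 ∧ ∀ ψ : Pt d → ℝ, ContDiff ℝ (⊤ : ℕ∞) ψ → HasCompactSupport ψ →
    0 ≤ ∫ x, ∫ y, u (x - y) * ψ x * ψ y

/-- Regularity (R) of a pair potential. -/
def IsRegularPot {d : ℕ} (φ : Pt d → EReal) : Prop :=
  (∃ m : ℝ, ∀ x, (m : EReal) ≤ φ x) ∧
  ∃ R : ℝ, 0 < R ∧ ∃ ϕ : ℝ → ℝ,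
    (∀ t ∈ Set.Ici (0 : ℝ), 0 < ϕ t) ∧ AntitoneOn ϕ (Set.Ici 0) ∧
    IntegrableOn (fun t => t ^ (d - 1) * ϕ t) (Set.Ici R) ∧
    ∀ x : Pt d, R ≤ ‖x‖ → φ x ≠ ⊤ ∧ |(φ x).toReal| ≤ ϕ ‖x‖

/-- Number of points of the finite configuration `x` in the unit cube centered at `r ∈ ℤ^d`. -/
def cubeCount {d n : ℕ} (x : Fin n → Pt d) (r : Fin d → ℤ) : ℕ :=
  Nat.card {i : Fin n // ∀ j, (r j : ℝ) - 1 / 2 ≤ x i j ∧ x i j < (r j : ℝ) + 1 / 2}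

/-- Sum of the interaction over unordered pairs of distinct points (with multiplicity). -/
def pairSum {d n : ℕ} (φ : Pt d → EReal) (x : Fin n → Pt d) : EReal :=
  ∑ i : Fin n, ∑ j ∈ Finset.Ioi i, φ (x i - x j)

/-- Superstability (SS). -/
def IsSuperstablePot {d : ℕ} (φ : Pt d → EReal) : Prop :=
  ∃ A B : ℝ, 0 < A ∧ 0 ≤ B ∧ ∀ (n : ℕ) (x : Fin n → Pt d),
    ((∑' r : Fin d → ℤ,
        (A * (cubeCount x r : ℝ) ^ 2 - B * (cubeCount x r : ℝ)) : ℝ) : EReal)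
      ≤ pairSum φ x

/-- Stability (S). -/
def IsStablePot {d : ℕ} (φ : Pt d → EReal) : Prop :=
  ∃ B : ℝ, 0 ≤ B ∧ ∀ (n : ℕ) (x : Fin n → Pt d),
    ((-(B * n) : ℝ) : EReal) ≤ pairSum φ x

/-- The potential `φ = -ln(1-f)` associated to a Mayer function `f`. -/
def defpot {d : ℕ} (f : Pt d → ℝ) : Pt d → EReal :=
  fun x => if f x = 1 then (⊤ : EReal) else ((-Real.log (1 - f x) : ℝ) : EReal)

def erealAbs (a : EReal) : ℝ≥0∞ :=
  if a = ⊤ ∨ a = ⊥ then ⊤ else ENNReal.ofReal |a.toReal|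

/-!
Write `r x γ * (r y γ - r y (γ + δ_x)) = r x γ * r y γ - r x γ * r y (γ + δ_x)`. The first
term gives an integrand that is symmetric in `x` and `y` up to Fubini. Applying the Mecke
identity twice turns the integral of the second term into the integral of `H` over ordered pairs
of distinct points of `γ`, i.e. against the second factorial moment measure, which is symmetric
as well.

The delicate point is measurability of `γ ↦ ∫⁻ x, f γ x ∂γ`, as the kernel `γ ↦ γ` on the space
of all measures is not s-finite. On measures that are finite on compacts it is a supremum of
integrals against finite kernels, obtained by restricting `γ` to compacts and discarding it when
its mass there is too large.
-/

section Truncation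

open Function

variable {α : Type*} [TopologicalSpace α] [SigmaCompactSpace α] [MeasurableSpace α]

/-- The cap `k` makes `ν ↦ truncate n k ν` a finite kernel, while the supremum over `n` and `k`
still recovers integrals against any `ν` that is finite on compacts. -/
def truncate (n k : ℕ) (ν : Measure α) : Measure α :=
  if ν (compactCovering α n) ≤ (k : ℝ≥0∞) then ν.restrict (compactCovering α n) else 0

lemma measurable_truncate [T2Space α] [OpensMeasurableSpace α] (n k : ℕ) :
    Measurable (truncate (α := α) n k) := by
  have hK : MeasurableSet (compactCovering α n) := (isCompact_compactCovering α n).measurableSet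
  refine Measure.measurable_of_measurable_coe _ fun s hs => ?_
  have h : (fun ν : Measure α => truncate n k ν s) = fun ν =>
      if ν (compactCovering α n) ≤ (k : ℝ≥0∞) then ν (s ∩ compactCovering α n) else 0 := by
    ext ν
    unfold truncate
    split_ifs <;> simp [Measure.restrict_apply hs]
  rw [h]
  exact Measurable.ite (measurableSet_le (Measure.measurable_coe hK) measurable_const)
    (Measure.measurable_coe (hs.inter hK)) measurable_const

lemma truncate_apply_univ_le (n k : ℕ) (ν : Measure α) : truncate n k ν Set.univ ≤ k := by
  unfold truncate
  split_ifs with h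
  · rwa [Measure.restrict_apply_univ]
  · simp

lemma iSup_lintegral_truncate (ν : Measure α) [IsFiniteMeasureOnCompacts ν] (f : α → ℝ≥0∞) :
    ⨆ (n : ℕ) (k : ℕ), ∫⁻ x, f x ∂(truncate n k ν) = ∫⁻ x, f x ∂ν := by
  have hrestrict : ∀ n, ∫⁻ x in compactCovering α n, f x ∂ν
      = ⨆ k : ℕ, ∫⁻ x, f x ∂(truncate n k ν) := by
    intro n
    obtain ⟨k, hk⟩ :=
      ENNReal.exists_nat_gt ((isCompact_compactCovering α n).measure_lt_top (μ := ν)).ne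
    refine le_antisymm ?_ (iSup_le fun k' => ?_)
    · refine le_iSup_of_le k (le_of_eq ?_)
      rw [truncate, if_pos hk.le]
    · unfold truncate
      split_ifs
      exacts [le_rfl, by simp]
  rw [← setLIntegral_univ, ← iUnion_compactCovering α,
    setLIntegral_iUnion_of_directed _
      (Monotone.directed_le fun _ _ h => compactCovering_subset α h)]
  simp_rw [hrestrict]

theorem exists_measurable_eq_lintegral [T2Space α] [OpensMeasurableSpace α] {β : Type*}
    [MeasurableSpace β] {π : β → Measure α} (hπ : Measurable π) {F : β → α → ℝ≥0∞}
    (hF : Measurable (uncurry F)) :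
    ∃ g : β → ℝ≥0∞, Measurable g ∧
      ∀ b, IsFiniteMeasureOnCompacts (π b) → g b = ∫⁻ x, F b x ∂(π b) := by
  refine ⟨fun b => ⨆ (n : ℕ) (k : ℕ), ∫⁻ x, F b x ∂(truncate n k (π b)),
    .iSup fun n => .iSup fun k => ?_, fun b _ => iSup_lintegral_truncate (π b) (F b)⟩
  let κ : ProbabilityTheory.Kernel β α :=
    ⟨fun b => truncate n k (π b), (measurable_truncate n k).comp hπ⟩
  have : ProbabilityTheory.IsFiniteKernel κ :=
    ⟨⟨k, ENNReal.natCast_lt_top k, fun b => truncate_apply_univ_le n k (π b)⟩⟩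
  exact hF.lintegral_kernel_prod_right' (κ := κ)

end Truncation

section SubDirac

open Function

variable {α : Type*} [MeasurableSpace α]

instance isFiniteMeasureOnCompacts_add [TopologicalSpace α] (ν₁ ν₂ : Measure α)
    [IsFiniteMeasureOnCompacts ν₁] [IsFiniteMeasureOnCompacts ν₂] :
    IsFiniteMeasureOnCompacts (ν₁ + ν₂) :=
  ⟨fun _ hK => by
    rw [Measure.add_apply]
    exact ENNReal.add_lt_top.2 ⟨hK.measure_lt_top, hK.measure_lt_top⟩⟩

lemma lintegral_sub_dirac [MeasurableSingletonClass α] {ν : Measure α} {x : α}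
    (hx : Measure.dirac x ≤ ν) {f : α → ℝ≥0∞} (hf : f x ≠ ⊤) :
    ∫⁻ y, f y ∂(ν - Measure.dirac x) = ∫⁻ y, f y ∂ν - f x := by
  conv_rhs => rw [← Measure.sub_add_cancel_of_le hx]
  rw [lintegral_add_measure, lintegral_dirac, ENNReal.add_sub_cancel_right hf]

lemma MeasureTheory.Measure.sum_dirac_sub_dirac {ι : Type*} [DecidableEq ι] (a : ι → α) (j : ι) :
    (Measure.sum fun i => Measure.dirac (a i)) - Measure.dirac (a j)
      = Measure.sum fun i => if i = j then 0 else Measure.dirac (a i) := by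
  have hsplit : (Measure.sum fun i => Measure.dirac (a i))
      = (Measure.sum fun i => if i = j then 0 else Measure.dirac (a i)) + Measure.dirac (a j) := by
    ext s hs
    rw [Measure.add_apply, Measure.sum_apply _ hs, Measure.sum_apply _ hs,
      ENNReal.tsum_eq_add_tsum_ite j, add_comm]
    congr 1
    exact tsum_congr fun i => by split_ifs <;> simp
  rw [hsplit, Measure.add_sub_cancel]

theorem exists_measurable_eq_lintegral_sub_dirac [TopologicalSpace α] [SigmaCompactSpace α]
    [T2Space α] [OpensMeasurableSpace α] {F : α → Measure α → α → ℝ≥0∞}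
    (hF : Measurable fun p : α × Measure α × α => F p.1 p.2.1 p.2.2)
    (hFtop : ∀ y ν x, F y ν x ≠ ⊤) :
    ∃ G : α → Measure α → ℝ≥0∞, Measurable (uncurry G) ∧
      ∀ y ν, IsFiniteMeasureOnCompacts ν → Measure.dirac y ≤ ν →
        G y ν = ∫⁻ x, F y ν x ∂(ν - Measure.dirac y) := by
  obtain ⟨g, hg, hgF⟩ := exists_measurable_eq_lintegral measurable_snd
    (F := fun p : α × Measure α => F p.1 p.2)
    (hF.comp (measurable_fst.fst.prodMk (measurable_fst.snd.prodMk measurable_snd)))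
  refine ⟨fun y ν => g (y, ν) - F y ν y,
    hg.sub (hF.comp (measurable_fst.prodMk (measurable_snd.prodMk measurable_fst))),
    fun y ν hν hy => ?_⟩
  rw [lintegral_sub_dirac hy (hFtop y ν y), ← hgF (y, ν) hν]

end SubDirac

section IteratedIntegrals

variable {X Y Z : Type*} [MeasurableSpace X] [MeasurableSpace Y] [MeasurableSpace Z]

lemma integral_toReal_sub_toReal {ν : Measure X} {p q : X → ℝ≥0∞} (hp : AEMeasurable p ν)
    (hq : AEMeasurable q ν) (hp_fin : ∫⁻ x, p x ∂ν ≠ ⊤) (hq_fin : ∫⁻ x, q x ∂ν ≠ ⊤) :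
    ∫ x, ((p x).toReal - (q x).toReal) ∂ν = (∫⁻ x, p x ∂ν).toReal - (∫⁻ x, q x ∂ν).toReal := by
  rw [integral_sub (integrable_toReal_of_lintegral_ne_top hp hp_fin)
      (integrable_toReal_of_lintegral_ne_top hq hq_fin),
    integral_toReal hp (ae_lt_top' hp hp_fin), integral_toReal hq (ae_lt_top' hq hq_fin)]

lemma integral_eq_toReal_sub {ν : Measure X} {f : X → ℝ} (hf : AEMeasurable f ν)
    (hpos : ∫⁻ x, ENNReal.ofReal (f x) ∂ν ≠ ⊤) (hneg : ∫⁻ x, ENNReal.ofReal (-f x) ∂ν ≠ ⊤) :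
    ∫ x, f x ∂ν = (∫⁻ x, ENNReal.ofReal (f x) ∂ν).toReal
      - (∫⁻ x, ENNReal.ofReal (-f x) ∂ν).toReal := by
  rw [← integral_toReal_sub_toReal hf.ennreal_ofReal (by fun_prop) hpos hneg]
  simp only [ENNReal.toReal_ofReal', max_zero_sub_max_neg_zero_eq_self]

variable {μ : Measure X} {ν : Measure Y} {η : Measure Z} [SFinite ν] [SFinite η]

lemma integral_integral_integral [SFinite μ] {E : Type*} [NormedAddCommGroup E] [NormedSpace ℝ E]
    {f : X → Y → Z → E} (hf : Integrable (fun p => f p.1 p.2.1 p.2.2) (μ.prod (ν.prod η))) :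
    ∫ x, (∫ y, (∫ z, f x y z ∂η) ∂ν) ∂μ = ∫ p, f p.1 p.2.1 p.2.2 ∂(μ.prod (ν.prod η)) := by
  rw [integral_prod _ hf]
  exact integral_congr_ae (hf.prod_right_ae.mono fun x hx => integral_integral hx)

lemma lintegral_lintegral_lintegral {f : X × Y × Z → ℝ≥0∞} (hf : Measurable f) :
    ∫⁻ p, f p ∂(μ.prod (ν.prod η)) = ∫⁻ x, (∫⁻ y, (∫⁻ z, f (x, y, z) ∂η) ∂ν) ∂μ := by
  rw [lintegral_prod _ hf.aemeasurable]
  exact lintegral_congr fun x => lintegral_prod _ (hf.comp measurable_prodMk_left).aemeasurable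

lemma measurePreserving_prodMap_id_swap [SFinite μ] :
    MeasurePreserving (Prod.map id Prod.swap) (μ.prod (ν.prod η)) (μ.prod (η.prod ν)) :=
  (MeasurePreserving.id μ).prod Measure.measurePreserving_swap

lemma integrable_prod_prod_swap [SFinite μ] {E : Type*} [NormedAddCommGroup E]
    {f : X → Y → Z → E} :
    Integrable (fun p => f p.1 p.2.2 p.2.1) (μ.prod (η.prod ν))
      ↔ Integrable (fun p => f p.1 p.2.1 p.2.2) (μ.prod (ν.prod η)) :=
  measurePreserving_prodMap_id_swap.integrable_comp_emb (g := fun p => f p.1 p.2.1 p.2.2)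
    (MeasurableEmbedding.id.prodMap MeasurableEquiv.prodComm.measurableEmbedding)

lemma integral_prod_prod_swap [SFinite μ] {E : Type*} [NormedAddCommGroup E] [NormedSpace ℝ E]
    (f : X → Y → Z → E) :
    ∫ p, f p.1 p.2.2 p.2.1 ∂(μ.prod (η.prod ν)) = ∫ p, f p.1 p.2.1 p.2.2 ∂(μ.prod (ν.prod η)) :=
  measurePreserving_prodMap_id_swap.integral_comp
    (MeasurableEmbedding.id.prodMap MeasurableEquiv.prodComm.measurableEmbedding)
    fun p => f p.1 p.2.1 p.2.2

end IteratedIntegrals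

namespace IsConfig

variable {d : ℕ} {γ : Config d}

lemma sFinite (hγ : IsConfig γ) : SFinite γ := by
  obtain ⟨-, I, a, rfl⟩ := hγ
  infer_instance

lemma isFiniteMeasureOnCompacts (hγ : IsConfig γ) : IsFiniteMeasureOnCompacts γ :=
  have := hγ.1
  isFiniteMeasureOnCompacts_of_isLocallyFiniteMeasure

lemma aemeasurable (hγ : IsConfig γ) {E : Type*} [MeasurableSpace E] (f : Pt d → E) :
    AEMeasurable f γ := by
  obtain ⟨-, I, a, rfl⟩ := hγ
  exact aemeasurable_sum_measure_iff.2 fun _ => aemeasurable_dirac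

lemma ae_dirac_le (hγ : IsConfig γ) : ∀ᵐ x ∂γ, Measure.dirac x ≤ γ := by
  obtain ⟨-, I, a, rfl⟩ := hγ
  refine Measure.ae_sum_iff.2 fun i => ?_
  rw [ae_dirac_eq]
  exact Filter.eventually_pure.2 (Measure.le_sum _ i)

lemma lintegral_lintegral_sub_dirac_comm (hγ : IsConfig γ) (Φ : Pt d → Pt d → ℝ≥0∞) :
    ∫⁻ x, (∫⁻ y, Φ y x ∂(γ - Measure.dirac x)) ∂γ
      = ∫⁻ x, (∫⁻ y, Φ x y ∂(γ - Measure.dirac x)) ∂γ := by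
  classical
  obtain ⟨-, I, a, rfl⟩ := hγ
  have hsum : ∀ Ψ : Pt d → Pt d → ℝ≥0∞,
      ∫⁻ x, (∫⁻ y, Ψ x y ∂((Measure.sum fun i => Measure.dirac (a i)) - Measure.dirac x))
        ∂(Measure.sum fun i => Measure.dirac (a i))
        = ∑' (j : I) (i : I), if i = j then 0 else Ψ (a j) (a i) := by
    intro Ψ
    simp only [lintegral_sum_measure, lintegral_dirac, Measure.sum_dirac_sub_dirac]
    exact tsum_congr fun j => tsum_congr fun i => by split_ifs <;> simp
  rw [hsum, hsum, ENNReal.tsum_comm]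
  exact tsum_congr fun j => tsum_congr fun i => by simp only [eq_comm]

end IsConfig

section Mecke

open Function

variable {d : ℕ}

def IsPapangelouIntensity (μ : Measure (Config d)) (r : Pt d → Config d → ℝ) : Prop :=
  ∀ G : Pt d → Config d → ℝ≥0∞, Measurable (uncurry G) →
    ∫⁻ γ, (∫⁻ x, G x γ ∂γ) ∂μ
      = ∫⁻ γ, (∫⁻ x, ENNReal.ofReal (r x γ) * G x (γ + Measure.dirac x)) ∂μ

/-- The integral of `Φ` against the second factorial moment measure of `μ`: for each `γ`, the sum
of `Φ γ x y` over ordered pairs of distinct points `x, y` of `γ`. -/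
def factorialLIntegral (μ : Measure (Config d)) (Φ : Config d → Pt d → Pt d → ℝ≥0∞) : ℝ≥0∞ :=
  ∫⁻ γ, (∫⁻ x, (∫⁻ y, Φ γ x y ∂(γ - Measure.dirac x)) ∂γ) ∂μ

variable {μ : Measure (Config d)}

lemma factorialLIntegral_comm (hconf : ∀ᵐ γ ∂μ, IsConfig γ)
    (Φ : Config d → Pt d → Pt d → ℝ≥0∞) :
    factorialLIntegral μ (fun γ x y => Φ γ y x) = factorialLIntegral μ Φ :=
  lintegral_congr_ae (hconf.mono fun γ hγ => hγ.lintegral_lintegral_sub_dirac_comm (Φ γ))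

lemma aemeasurable_lintegral_lintegral_sub_dirac (hconf : ∀ᵐ γ ∂μ, IsConfig γ)
    {Φ : Config d → Pt d → Pt d → ℝ≥0∞}
    (hΦ : Measurable fun p : Config d × Pt d × Pt d => Φ p.1 p.2.1 p.2.2)
    (hΦtop : ∀ γ x y, Φ γ x y ≠ ⊤) :
    AEMeasurable (fun γ => ∫⁻ x, (∫⁻ y, Φ γ x y ∂(γ - Measure.dirac x)) ∂γ) μ := by
  obtain ⟨G, hG, hGΦ⟩ := exists_measurable_eq_lintegral_sub_dirac
    (F := fun x γ y => Φ γ x y) (by fun_prop) fun _ _ _ => hΦtop _ _ _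
  obtain ⟨g, hg, hgG⟩ := exists_measurable_eq_lintegral measurable_id
    (F := fun γ x => G x γ) (hG.comp measurable_swap)
  refine ⟨g, hg, ?_⟩
  filter_upwards [hconf] with γ hγ
  have := hγ.isFiniteMeasureOnCompacts
  rw [hgG γ this]
  exact lintegral_congr_ae (hγ.ae_dirac_le.mono fun x hx => (hGΦ x γ this hx).symm)

theorem integral_factorial_eq (hconf : ∀ᵐ γ ∂μ, IsConfig γ) {H : Config d → Pt d → Pt d → ℝ}
    (hH : Measurable fun p : Config d × Pt d × Pt d => H p.1 p.2.1 p.2.2)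
    (hfin : factorialLIntegral μ (fun γ x y => ENNReal.ofReal |H γ x y|) < ⊤) :
    ∫ γ, (∫ x, (∫ y, H γ x y ∂(γ - Measure.dirac x)) ∂γ) ∂μ
      = (factorialLIntegral μ fun γ x y => ENNReal.ofReal (H γ x y)).toReal
        - (factorialLIntegral μ fun γ x y => ENNReal.ofReal (-H γ x y)).toReal := by
  have hpos := aemeasurable_lintegral_lintegral_sub_dirac hconf hH.ennreal_ofReal
    fun _ _ _ => ENNReal.ofReal_ne_top
  have hneg := aemeasurable_lintegral_lintegral_sub_dirac hconf
    (Φ := fun γ x y => ENNReal.ofReal (-H γ x y)) (by fun_prop) fun _ _ _ => ENNReal.ofReal_ne_top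
  have hpos_fin : factorialLIntegral μ (fun γ x y => ENNReal.ofReal (H γ x y)) ≠ ⊤ :=
    ne_top_of_le_ne_top hfin.ne <| lintegral_mono fun _ => lintegral_mono fun _ =>
      lintegral_mono fun _ => ENNReal.ofReal_le_ofReal (le_abs_self _)
  have hneg_fin : factorialLIntegral μ (fun γ x y => ENNReal.ofReal (-H γ x y)) ≠ ⊤ :=
    ne_top_of_le_ne_top hfin.ne <| lintegral_mono fun _ => lintegral_mono fun _ =>
      lintegral_mono fun _ => ENNReal.ofReal_le_ofReal (neg_le_abs _)
  rw [factorialLIntegral, factorialLIntegral,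
    ← integral_toReal_sub_toReal hpos hneg hpos_fin hneg_fin]
  refine integral_congr_ae ?_
  filter_upwards [hconf, ae_lt_top' hpos hpos_fin, ae_lt_top' hneg hneg_fin]
    with γ hγ hγpos hγneg
  rw [← integral_toReal_sub_toReal (hγ.aemeasurable _) (hγ.aemeasurable _) hγpos.ne hγneg.ne]
  refine integral_congr_ae ?_
  filter_upwards [ae_lt_top' (hγ.aemeasurable _) hγpos.ne,
    ae_lt_top' (hγ.aemeasurable _) hγneg.ne] with x hxpos hxneg
  exact integral_eq_toReal_sub ((hγ.aemeasurable _).mono_measure Measure.sub_le) hxpos.ne hxneg.ne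

namespace IsPapangelouIntensity

variable {r : Pt d → Config d → ℝ}

/-- The Mecke identity for `G y γ = ∫⁻ x, F y γ x ∂(γ - δ_y)`, which need not be measurable. -/
lemma lintegral_lintegral_sub_dirac (hM : IsPapangelouIntensity μ r)
    (hconf : ∀ᵐ γ ∂μ, IsConfig γ) {F : Pt d → Config d → Pt d → ℝ≥0∞}
    (hF : Measurable fun p : Pt d × Config d × Pt d => F p.1 p.2.1 p.2.2)
    (hFtop : ∀ y γ x, F y γ x ≠ ⊤) :
    ∫⁻ γ, (∫⁻ y, (∫⁻ x, F y γ x ∂(γ - Measure.dirac y)) ∂γ) ∂μ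
      = ∫⁻ γ, (∫⁻ y, ENNReal.ofReal (r y γ) * ∫⁻ x, F y (γ + Measure.dirac y) x ∂γ) ∂μ := by
  obtain ⟨G, hG, hGF⟩ := exists_measurable_eq_lintegral_sub_dirac hF hFtop
  calc _ = ∫⁻ γ, (∫⁻ y, G y γ ∂γ) ∂μ := by
        refine lintegral_congr_ae ?_
        filter_upwards [hconf] with γ hγ
        exact lintegral_congr_ae (hγ.ae_dirac_le.mono fun y hy =>
          (hGF y γ hγ.isFiniteMeasureOnCompacts hy).symm)
    _ = ∫⁻ γ, (∫⁻ y, ENNReal.ofReal (r y γ) * G y (γ + Measure.dirac y)) ∂μ := hM G hG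
    _ = _ := by
        refine lintegral_congr_ae ?_
        filter_upwards [hconf] with γ hγ
        have := hγ.isFiniteMeasureOnCompacts
        refine lintegral_congr fun y => ?_
        rw [hGF y _ inferInstance (Measure.le_add_left le_rfl), Measure.add_sub_cancel]

theorem factorialLIntegral_eq (hM : IsPapangelouIntensity μ r) (hconf : ∀ᵐ γ ∂μ, IsConfig γ)
    (hr : Measurable (uncurry r)) {Φ : Config d → Pt d → Pt d → ℝ≥0∞}
    (hΦ : Measurable fun p : Config d × Pt d × Pt d => Φ p.1 p.2.1 p.2.2)
    (hΦtop : ∀ γ x y, Φ γ x y ≠ ⊤) :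
    factorialLIntegral μ Φ = ∫⁻ γ, (∫⁻ x, ∫⁻ y, ENNReal.ofReal (r x γ) *
      ENNReal.ofReal (r y (γ + Measure.dirac x)) *
        Φ (γ + Measure.dirac x + Measure.dirac y) x y) ∂μ := by
  have hG : Measurable (uncurry fun x γ =>
      ∫⁻ y, ENNReal.ofReal (r y γ) * Φ (γ + Measure.dirac y) x y) :=
    Measurable.lintegral_prod_right'
      (f := fun q : (Pt d × Config d) × Pt d =>
        ENNReal.ofReal (r q.2 q.1.2) * Φ (q.1.2 + Measure.dirac q.2) q.1.1 q.2) (by fun_prop)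
  rw [← factorialLIntegral_comm hconf, factorialLIntegral,
    hM.lintegral_lintegral_sub_dirac hconf (F := fun y γ x => Φ γ x y) (by fun_prop)
      fun _ _ _ => hΦtop _ _ _]
  calc _ = ∫⁻ γ, (∫⁻ x, (∫⁻ y, ENNReal.ofReal (r y γ) * Φ (γ + Measure.dirac y) x y) ∂γ) ∂μ := by
        refine lintegral_congr_ae ?_
        filter_upwards [hconf] with γ hγ
        have := hγ.sFinite
        rw [lintegral_lintegral_swap (by fun_prop)]
        exact lintegral_congr fun y => (lintegral_const_mul _ (by fun_prop)).symm
    _ = _ := hM _ hG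
    _ = _ := by
        refine lintegral_congr fun γ => lintegral_congr fun x => ?_
        rw [← lintegral_const_mul _ (by fun_prop)]
        exact lintegral_congr fun y => (mul_assoc _ _ _).symm

lemma lintegral_ofReal_twoPoint (hM : IsPapangelouIntensity μ r) (hconf : ∀ᵐ γ ∂μ, IsConfig γ)
    (hrpos : ∀ x γ, 0 ≤ r x γ) (hr : Measurable (uncurry r)) {K : Config d → Pt d → Pt d → ℝ}
    (hK : Measurable fun p : Config d × Pt d × Pt d => K p.1 p.2.1 p.2.2) :
    ∫⁻ p, ENNReal.ofReal (r p.2.1 p.1 * r p.2.2 (p.1 + Measure.dirac p.2.1) *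
        K (p.1 + Measure.dirac p.2.1 + Measure.dirac p.2.2) p.2.1 p.2.2)
        ∂(μ.prod (volume.prod volume))
      = factorialLIntegral μ fun γ x y => ENNReal.ofReal (K γ x y) := by
  rw [hM.factorialLIntegral_eq hconf hr (by fun_prop) fun _ _ _ => ENNReal.ofReal_ne_top,
    lintegral_lintegral_lintegral (by fun_prop)]
  simp only [ENNReal.ofReal_mul (mul_nonneg (hrpos _ _) (hrpos _ _)),
    ENNReal.ofReal_mul (hrpos _ _)]

lemma integrable_twoPoint (hM : IsPapangelouIntensity μ r) (hconf : ∀ᵐ γ ∂μ, IsConfig γ)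
    (hrpos : ∀ x γ, 0 ≤ r x γ) (hr : Measurable (uncurry r)) {H : Config d → Pt d → Pt d → ℝ}
    (hH : Measurable fun p : Config d × Pt d × Pt d => H p.1 p.2.1 p.2.2)
    (hfin : factorialLIntegral μ (fun γ x y => ENNReal.ofReal |H γ x y|) < ⊤) :
    Integrable (fun p : Config d × Pt d × Pt d =>
      r p.2.1 p.1 * r p.2.2 (p.1 + Measure.dirac p.2.1) *
        H (p.1 + Measure.dirac p.2.1 + Measure.dirac p.2.2) p.2.1 p.2.2)
      (μ.prod (volume.prod volume)) := by
  refine ⟨by fun_prop, ?_⟩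
  rw [hasFiniteIntegral_iff_enorm]
  refine lt_of_eq_of_lt ?_ ((hM.lintegral_ofReal_twoPoint hconf hrpos hr
    (K := fun γ x y => |H γ x y|) (by fun_prop)).trans_lt hfin)
  refine lintegral_congr fun p => ?_
  rw [Real.enorm_eq_ofReal_abs, abs_mul, abs_mul, abs_of_nonneg (hrpos _ _),
    abs_of_nonneg (hrpos _ _)]

lemma integral_twoPoint (hM : IsPapangelouIntensity μ r) (hconf : ∀ᵐ γ ∂μ, IsConfig γ)
    (hrpos : ∀ x γ, 0 ≤ r x γ) (hr : Measurable (uncurry r)) {H : Config d → Pt d → Pt d → ℝ}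
    (hH : Measurable fun p : Config d × Pt d × Pt d => H p.1 p.2.1 p.2.2)
    (hfin : factorialLIntegral μ (fun γ x y => ENNReal.ofReal |H γ x y|) < ⊤) :
    ∫ p, r p.2.1 p.1 * r p.2.2 (p.1 + Measure.dirac p.2.1) *
        H (p.1 + Measure.dirac p.2.1 + Measure.dirac p.2.2) p.2.1 p.2.2
        ∂(μ.prod (volume.prod volume))
      = (factorialLIntegral μ fun γ x y => ENNReal.ofReal (H γ x y)).toReal
        - (factorialLIntegral μ fun γ x y => ENNReal.ofReal (-H γ x y)).toReal := by
  rw [integral_eq_lintegral_pos_part_sub_lintegral_neg_part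
      (hM.integrable_twoPoint hconf hrpos hr hH hfin),
    ← hM.lintegral_ofReal_twoPoint hconf hrpos hr hH,
    ← hM.lintegral_ofReal_twoPoint hconf hrpos hr (K := fun γ x y => -H γ x y) (by fun_prop)]
  simp only [mul_neg]

theorem integral_kernel [SFinite μ] (hM : IsPapangelouIntensity μ r) (hconf : ∀ᵐ γ ∂μ, IsConfig γ)
    (hrpos : ∀ x γ, 0 ≤ r x γ) (hr : Measurable (uncurry r)) {H : Config d → Pt d → Pt d → ℝ}
    (hH : Measurable fun p : Config d × Pt d × Pt d => H p.1 p.2.1 p.2.2)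
    (hP : Integrable (fun p : Config d × Pt d × Pt d => r p.2.1 p.1 * r p.2.2 p.1 *
        H (p.1 + Measure.dirac p.2.1 + Measure.dirac p.2.2) p.2.1 p.2.2)
        (μ.prod (volume.prod volume)))
    (hfin : factorialLIntegral μ (fun γ x y => ENNReal.ofReal |H γ x y|) < ⊤) :
    ∫ γ, (∫ x, ∫ y, r x γ * (r y γ - r y (γ + Measure.dirac x)) *
        H (γ + Measure.dirac x + Measure.dirac y) x y) ∂μ
      = ∫ p, r p.2.1 p.1 * r p.2.2 p.1 *
          H (p.1 + Measure.dirac p.2.1 + Measure.dirac p.2.2) p.2.1 p.2.2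
          ∂(μ.prod (volume.prod volume))
        - ((factorialLIntegral μ fun γ x y => ENNReal.ofReal (H γ x y)).toReal
          - (factorialLIntegral μ fun γ x y => ENNReal.ofReal (-H γ x y)).toReal) := by
  have hQ := hM.integrable_twoPoint hconf hrpos hr hH hfin
  simp only [mul_sub, sub_mul]
  rw [integral_integral_integral (f := fun γ x y =>
      r x γ * r y γ * H (γ + Measure.dirac x + Measure.dirac y) x y
      - r x γ * r y (γ + Measure.dirac x) * H (γ + Measure.dirac x + Measure.dirac y) x y)
    (hP.sub hQ), integral_sub hP hQ, hM.integral_twoPoint hconf hrpos hr hH hfin]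

theorem integral_kernel_swap [SFinite μ] (hM : IsPapangelouIntensity μ r)
    (hconf : ∀ᵐ γ ∂μ, IsConfig γ) (hrpos : ∀ x γ, 0 ≤ r x γ) (hr : Measurable (uncurry r))
    {H : Config d → Pt d → Pt d → ℝ}
    (hH : Measurable fun p : Config d × Pt d × Pt d => H p.1 p.2.1 p.2.2)
    (hP : Integrable (fun p : Config d × Pt d × Pt d => r p.2.1 p.1 * r p.2.2 p.1 *
        H (p.1 + Measure.dirac p.2.1 + Measure.dirac p.2.2) p.2.1 p.2.2)
        (μ.prod (volume.prod volume)))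
    (hfin : factorialLIntegral μ (fun γ x y => ENNReal.ofReal |H γ x y|) < ⊤) :
    ∫ γ, (∫ y, ∫ x, r y γ * (r x γ - r x (γ + Measure.dirac y)) *
        H (γ + Measure.dirac x + Measure.dirac y) x y) ∂μ
      = ∫ p, r p.2.1 p.1 * r p.2.2 p.1 *
          H (p.1 + Measure.dirac p.2.1 + Measure.dirac p.2.2) p.2.1 p.2.2
          ∂(μ.prod (volume.prod volume))
        - ((factorialLIntegral μ fun γ x y => ENNReal.ofReal (H γ x y)).toReal
          - (factorialLIntegral μ fun γ x y => ENNReal.ofReal (-H γ x y)).toReal) := by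
  have hP_swap : ∀ p : Config d × Pt d × Pt d, r p.2.2 p.1 * r p.2.1 p.1 *
      H (p.1 + Measure.dirac p.2.2 + Measure.dirac p.2.1) p.2.2 p.2.1
        = r p.2.1 p.1 * r p.2.2 p.1 *
          H (p.1 + Measure.dirac p.2.1 + Measure.dirac p.2.2) p.2.2 p.2.1 :=
    fun p => by rw [mul_comm (r p.2.2 p.1), add_right_comm p.1]
  have key := hM.integral_kernel hconf hrpos hr (H := fun σ x y => H σ y x) (by fun_prop)
    (((integrable_prod_prod_swap (f := fun γ x y =>
      r x γ * r y γ * H (γ + Measure.dirac x + Measure.dirac y) x y)).2 hP).congr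
        (ae_of_all _ hP_swap))
    ((factorialLIntegral_comm hconf fun γ x y => ENNReal.ofReal |H γ x y|).trans_lt hfin)
  rw [← integral_congr_ae (ae_of_all _ hP_swap), integral_prod_prod_swap fun γ x y =>
      r x γ * r y γ * H (γ + Measure.dirac x + Measure.dirac y) x y,
    factorialLIntegral_comm hconf fun γ x y => ENNReal.ofReal (H γ x y),
    factorialLIntegral_comm hconf fun γ x y => ENNReal.ofReal (-H γ x y)] at key
  rw [← key]
  simp only [add_right_comm _ (Measure.dirac _) (Measure.dirac _)]

end IsPapangelouIntensity

end Mecke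

theorem kernel_symmetry_general {d : ℕ}
    (μ : Measure (Config d)) [IsProbabilityMeasure μ]
    (hconf : ∀ᵐ γ ∂μ, IsConfig γ)
    (r : Pt d → Config d → ℝ) (hrpos : ∀ x γ, 0 ≤ r x γ)
    (hr : Measurable (Function.uncurry r))
    (hMecke : ∀ G : Pt d → Config d → ℝ≥0∞, Measurable (Function.uncurry G) →
      ∫⁻ γ, (∫⁻ x, G x γ ∂γ) ∂μ
        = ∫⁻ γ, (∫⁻ x, ENNReal.ofReal (r x γ) * G x (γ + Measure.dirac x)) ∂μ)
    (H : Config d → Pt d → Pt d → ℝ)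
    (hHmeas : Measurable fun p : Config d × Pt d × Pt d => H p.1 p.2.1 p.2.2)
    (hH1 : ∫⁻ γ, (∫⁻ x, ∫⁻ y, ENNReal.ofReal (r x γ) * ENNReal.ofReal (r y γ) *
        ENNReal.ofReal |H (γ + Measure.dirac x + Measure.dirac y) x y|) ∂μ < ⊤)
    (hH2 : ∫⁻ γ, (∫⁻ x, (∫⁻ y, ENNReal.ofReal |H γ x y| ∂(γ - Measure.dirac x)) ∂γ) ∂μ < ⊤) :
    (∫ γ, (∫ x, ∫ y, r x γ * (r y γ - r y (γ + Measure.dirac x)) *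
          H (γ + Measure.dirac x + Measure.dirac y) x y) ∂μ
      = ∫ γ, (∫ y, ∫ x, r y γ * (r x γ - r x (γ + Measure.dirac y)) *
          H (γ + Measure.dirac x + Measure.dirac y) x y) ∂μ) ∧
    (∫ γ, (∫ x, ∫ y, r x γ * (r y γ - r y (γ + Measure.dirac x)) *
          H (γ + Measure.dirac x + Measure.dirac y) x y) ∂μ
      = (∫ γ, (∫ x, ∫ y, r x γ * r y γ *
            H (γ + Measure.dirac x + Measure.dirac y) x y) ∂μ)
        - ∫ γ, (∫ x, (∫ y, H γ x y ∂(γ - Measure.dirac x)) ∂γ) ∂μ) := by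
  have hM : IsPapangelouIntensity μ r := hMecke
  have hP : Integrable (fun p : Config d × Pt d × Pt d => r p.2.1 p.1 * r p.2.2 p.1 *
      H (p.1 + Measure.dirac p.2.1 + Measure.dirac p.2.2) p.2.1 p.2.2)
      (μ.prod (volume.prod volume)) := by
    refine ⟨by fun_prop, ?_⟩
    rw [hasFiniteIntegral_iff_enorm, lintegral_lintegral_lintegral (by fun_prop)]
    simpa only [enorm_mul, Real.enorm_of_nonneg (hrpos _ _), Real.enorm_eq_ofReal_abs] using hH1
  have key := hM.integral_kernel hconf hrpos hr hHmeas hP hH2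
  refine ⟨key.trans (hM.integral_kernel_swap hconf hrpos hr hHmeas hP hH2).symm, ?_⟩
  rw [key, integral_integral_integral (f := fun γ x y =>
      r x γ * r y γ * H (γ + Measure.dirac x + Measure.dirac y) x y) hP,
    integral_factorial_eq hconf hHmeas hH2]

/-- Symmetry of the kernel `r(x,γ)·D_x⁺r(y,·)(γ)` under exchange of `x` and `y`. -/
theorem kernel_symmetry {d : ℕ}
    (μ : Measure (Config d)) [IsProbabilityMeasure μ]
    (hconf : ∀ᵐ γ ∂μ, IsConfig γ)
    (r : Pt d → Config d → ℝ) (hrpos : ∀ x γ, 0 ≤ r x γ)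
    (hr : Measurable (Function.uncurry r))
    (hMecke : ∀ G : Pt d → Config d → ℝ≥0∞, Measurable (Function.uncurry G) →
      ∫⁻ γ, (∫⁻ x, G x γ ∂γ) ∂μ
        = ∫⁻ γ, (∫⁻ x, ENNReal.ofReal (r x γ) * G x (γ + Measure.dirac x)) ∂μ)
    (H : Config d → Pt d → Pt d → ℝ)
    (hHmeas : Measurable fun p : Config d × Pt d × Pt d => H p.1 p.2.1 p.2.2)
    (hHbd : ∃ C, ∀ γ x y, |H γ x y| ≤ C)
    (hH1 : ∫⁻ γ, (∫⁻ x, ∫⁻ y, ENNReal.ofReal (r x γ) * ENNReal.ofReal (r y γ) *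
        ENNReal.ofReal |H (γ + Measure.dirac x + Measure.dirac y) x y|) ∂μ < ⊤)
    (hH2 : ∫⁻ γ, (∫⁻ x, (∫⁻ y, ENNReal.ofReal |H γ x y| ∂(γ - Measure.dirac x)) ∂γ) ∂μ < ⊤) :
    (∫ γ, (∫ x, ∫ y, r x γ * (r y γ - r y (γ + Measure.dirac x)) *
          H (γ + Measure.dirac x + Measure.dirac y) x y) ∂μ
      = ∫ γ, (∫ y, ∫ x, r y γ * (r x γ - r x (γ + Measure.dirac y)) *
          H (γ + Measure.dirac x + Measure.dirac y) x y) ∂μ) ∧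
    (∫ γ, (∫ x, ∫ y, r x γ * (r y γ - r y (γ + Measure.dirac x)) *
          H (γ + Measure.dirac x + Measure.dirac y) x y) ∂μ
      = (∫ γ, (∫ x, ∫ y, r x γ * r y γ *
            H (γ + Measure.dirac x + Measure.dirac y) x y) ∂μ)
        - ∫ γ, (∫ x, (∫ y, H γ x y ∂(γ - Measure.dirac x)) ∂γ) ∂μ) :=
  kernel_symmetry_general μ hconf r hrpos hr hMecke H hHmeas hH1 hH2

end
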